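/- arXiv:1109.6686 — 2 statements merged into one kernel-verified Lean document; each statement's English description precedes it below -/
import Mathlib

section
/- Let (f_k) be a sequence in L²(Ω;ℝᵐ) over a finite measure space with sup_k ‖f_k‖_{L²} < ∞ and f_k ⇀ f weakly in L². Suppose that for every bounded continuous g : ℝᵐ → ℝ, ∫ φ·g(f_k) → ∫ φ·⟨ν_y, g⟩ dy for all φ ∈ C(Ω̄), where (ν_y) is a family of probability measures. Then for every nonnegative φ ∈ C(Ω̄), ∫ φ(y) ⟨ν_y, |λ|²⟩ dy ≤ liminf_k ∫ φ(y) |f_k(y)|² dy; in particular ⟨ν_·, |λ|²⟩ ∈ L¹(Ω). -/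
open MeasureTheory
open scoped RealInnerProductSpace ENNReal

/-- Lower semicontinuity giving nonnegativity of the energy concentration measure:
if `(f_k)` is bounded in `L²`, converges weakly in `L²` to `f`, and generates the
Young measure `(ν_y)` (i.e. represents weak limits of bounded continuous
compositions), then for every nonnegative continuous test function `φ`,
`∫ φ ⟨ν_y, |λ|²⟩ dy ≤ liminf ∫ φ |f_k|² dy`; in particular `⟨ν_·, |λ|²⟩ ∈ L¹`. -/
theorem young_measure_energy_lsc {m : ℕ} {Ω : Type*}
    [MetricSpace Ω] [CompactSpace Ω] [MeasurableSpace Ω] [BorelSpace Ω]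
    (μ : Measure Ω) [IsFiniteMeasure μ]
    (f : ℕ → Ω → EuclideanSpace ℝ (Fin m)) (hf : ∀ k, Measurable (f k))
    (K : ℝ≥0∞) (hK : K ≠ ∞) (hbd : ∀ k, ∫⁻ y, ‖f k y‖₊ ^ 2 ∂μ ≤ K)
    (flim : Ω → EuclideanSpace ℝ (Fin m)) (hflim : MemLp flim 2 μ)
    (hweak : ∀ g : Ω → EuclideanSpace ℝ (Fin m), MemLp g 2 μ →
      Filter.Tendsto (fun k => ∫ y, ⟪f k y, g y⟫ ∂μ) Filter.atTop
        (nhds (∫ y, ⟪flim y, g y⟫ ∂μ)))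
    (ν : Ω → Measure (EuclideanSpace ℝ (Fin m)))
    (hνprob : ∀ y, IsProbabilityMeasure (ν y))
    (hνmeas : ∀ s : Set (EuclideanSpace ℝ (Fin m)), MeasurableSet s →
      Measurable fun y => ν y s)
    (hrep : ∀ g : EuclideanSpace ℝ (Fin m) → ℝ, Continuous g →
      (∃ M : ℝ, ∀ lam, |g lam| ≤ M) →
      ∀ φ : Ω → ℝ, Continuous φ →
        Filter.Tendsto (fun k => ∫ y, φ y * g (f k y) ∂μ) Filter.atTop
          (nhds (∫ y, φ y * ∫ lam, g lam ∂(ν y) ∂μ))) :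
    (∀ φ : Ω → ℝ, Continuous φ → (∀ y, 0 ≤ φ y) →
      ∫⁻ y, ENNReal.ofReal (φ y) * ∫⁻ lam, ‖lam‖₊ ^ 2 ∂(ν y) ∂μ ≤
        Filter.liminf (fun k => ∫⁻ y, ENNReal.ofReal (φ y) * ‖f k y‖₊ ^ 2 ∂μ)
          Filter.atTop) ∧
    ∫⁻ y, ∫⁻ lam, ‖lam‖₊ ^ 2 ∂(ν y) ∂μ < ∞ := by
  have νmeas : Measurable ν := Measure.measurable_of_measurable_coe ν hνmeas
  -- real truncations  q_R(λ) = min(|λ|², R²)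
  set g : ℕ → EuclideanSpace ℝ (Fin m) → ℝ :=
    fun R lam => min (‖lam‖ ^ 2) ((R : ℝ) ^ 2) with hgdef
  have hgc : ∀ R, Continuous (g R) := fun R =>
    ((continuous_norm).pow 2).min continuous_const
  have hg0 : ∀ R lam, 0 ≤ g R lam := fun R lam =>
    le_min (by positivity) (by positivity)
  have hgle : ∀ R lam, g R lam ≤ (R : ℝ) ^ 2 := fun R lam => min_le_right _ _
  have hpt : ∀ (R : ℕ) lam, ENNReal.ofReal (g R lam)
      = min ((‖lam‖₊ : ℝ≥0∞) ^ 2) ((R : ℝ≥0∞) ^ 2) := by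
    intro R lam
    have hmono : Monotone ENNReal.ofReal := fun a b h => ENNReal.ofReal_le_ofReal h
    rw [show g R lam = min (‖lam‖ ^ 2) ((R : ℝ) ^ 2) from rfl, hmono.map_min]
    congr 1
    · rw [ENNReal.ofReal_pow (norm_nonneg _), ofReal_norm, enorm_eq_nnnorm]
    · rw [ENNReal.ofReal_pow (by positivity), ENNReal.ofReal_natCast]
  have hgmono : ∀ lam, Monotone fun R : ℕ => ENNReal.ofReal (g R lam) := by
    intro lam a b hab
    refine ENNReal.ofReal_le_ofReal (min_le_min le_rfl ?_)
    have : (a : ℝ) ≤ (b : ℝ) := by exact_mod_cast hab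
    gcongr
  have hsup : ∀ lam, (⨆ R : ℕ, ENNReal.ofReal (g R lam)) = (‖lam‖₊ : ℝ≥0∞) ^ 2 := by
    intro lam
    simp_rw [hpt]
    rw [← inf_iSup_eq]
    have htop : (⨆ R : ℕ, ((R : ℝ≥0∞)) ^ 2) = ⊤ := by
      rw [eq_top_iff, ← ENNReal.iSup_natCast]
      refine iSup_le fun n => le_iSup_of_le n ?_
      rcases Nat.eq_zero_or_pos n with h | h
      · simp [h]
      · have h1 : (1 : ℝ≥0∞) ≤ (n : ℝ≥0∞) := by exact_mod_cast h
        calc (n : ℝ≥0∞) = (n : ℝ≥0∞) ^ 1 := (pow_one _).symm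
          _ ≤ (n : ℝ≥0∞) ^ 2 := pow_le_pow_right₀ h1 one_le_two
    rw [htop]
    exact inf_top_eq _
  have hI : ∀ R : ℕ, Measurable fun y => ∫⁻ lam, ENNReal.ofReal (g R lam) ∂ν y :=
    fun R => (Measure.measurable_lintegral ((hgc R).measurable.ennreal_ofReal)).comp νmeas
  have hIle : ∀ (R : ℕ) y, (∫⁻ lam, ENNReal.ofReal (g R lam) ∂ν y) ≤ (R : ℝ≥0∞) ^ 2 := by
    intro R y
    haveI := hνprob y
    calc ∫⁻ lam, ENNReal.ofReal (g R lam) ∂ν y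
        ≤ ∫⁻ _, (R : ℝ≥0∞) ^ 2 ∂ν y :=
          lintegral_mono fun lam => by rw [hpt]; exact min_le_right _ _
      _ = (R : ℝ≥0∞) ^ 2 := by simp
  have hIne : ∀ (R : ℕ) y, (∫⁻ lam, ENNReal.ofReal (g R lam) ∂ν y) ≠ ∞ :=
    fun R y => ((hIle R y).trans_lt (ENNReal.pow_ne_top (ENNReal.natCast_ne_top R)).lt_top).ne
  have main : ∀ φ : Ω → ℝ, Continuous φ → (∀ y, 0 ≤ φ y) →
      ∫⁻ y, ENNReal.ofReal (φ y) * ∫⁻ lam, ‖lam‖₊ ^ 2 ∂(ν y) ∂μ ≤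
        Filter.liminf (fun k => ∫⁻ y, ENNReal.ofReal (φ y) * ‖f k y‖₊ ^ 2 ∂μ)
          Filter.atTop := by
    intro φ hφc hφ0
    obtain ⟨C, hC⟩ : ∃ C : ℝ, ∀ y, φ y ≤ C := by
      obtain ⟨C, hC⟩ := (isCompact_range hφc).bddAbove
      exact ⟨C, fun y => hC ⟨y, rfl⟩⟩
    have hEy : ∀ y, (∫⁻ lam, (‖lam‖₊ : ℝ≥0∞) ^ 2 ∂ν y)
        = ⨆ R : ℕ, ∫⁻ lam, ENNReal.ofReal (g R lam) ∂ν y := by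
      intro y
      rw [← lintegral_iSup (fun R => (hgc R).measurable.ennreal_ofReal)
        (fun a b hab => fun lam => hgmono lam hab)]
      exact lintegral_congr fun lam => (hsup lam).symm
    calc ∫⁻ y, ENNReal.ofReal (φ y) * ∫⁻ lam, (‖lam‖₊ : ℝ≥0∞) ^ 2 ∂ν y ∂μ
        = ⨆ R : ℕ, ∫⁻ y, ENNReal.ofReal (φ y) * ∫⁻ lam, ENNReal.ofReal (g R lam) ∂ν y ∂μ := by
          simp_rw [hEy, ENNReal.mul_iSup]
          exact lintegral_iSup
            (fun R => (hφc.measurable.ennreal_ofReal).mul (hI R))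
            (fun a b hab => fun y =>
              mul_le_mul_right (lintegral_mono fun lam => hgmono lam hab) _)
      _ ≤ Filter.liminf (fun k => ∫⁻ y, ENNReal.ofReal (φ y) * ‖f k y‖₊ ^ 2 ∂μ)
          Filter.atTop := by
          refine iSup_le fun R => ?_
          have htend := hrep (g R) (hgc R)
            ⟨(R : ℝ) ^ 2, fun lam => by
              rw [abs_of_nonneg (hg0 R lam)]; exact hgle R lam⟩ φ hφc
          -- identify the limit with the lintegral expression
          have h2 : ENNReal.ofReal (∫ y, φ y * ∫ lam, g R lam ∂ν y ∂μ)
              = ∫⁻ y, ENNReal.ofReal (φ y) * ∫⁻ lam, ENNReal.ofReal (g R lam) ∂ν y ∂μ := by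
            have hint_eq : ∀ y, ∫ lam, g R lam ∂ν y
                = (∫⁻ lam, ENNReal.ofReal (g R lam) ∂ν y).toReal := fun y => by
              rw [integral_eq_lintegral_of_nonneg_ae (Filter.Eventually.of_forall (hg0 R))
                ((hgc R).aestronglyMeasurable)]
            have hmeasF : Measurable fun y =>
                φ y * (∫⁻ lam, ENNReal.ofReal (g R lam) ∂ν y).toReal :=
              hφc.measurable.mul ((hI R).ennreal_toReal)
            have hintF : Integrable (fun y =>
                φ y * (∫⁻ lam, ENNReal.ofReal (g R lam) ∂ν y).toReal) μ := by
              refine ⟨hmeasF.aestronglyMeasurable,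
                HasFiniteIntegral.of_bounded (C := (max C 0) * (R : ℝ) ^ 2)
                  (Filter.Eventually.of_forall fun y => ?_)⟩
              rw [Real.norm_eq_abs, abs_mul, abs_of_nonneg (hφ0 y),
                abs_of_nonneg ENNReal.toReal_nonneg]
              refine mul_le_mul ((hC y).trans (le_max_left _ _)) ?_
                ENNReal.toReal_nonneg (le_max_right _ _)
              calc (∫⁻ lam, ENNReal.ofReal (g R lam) ∂ν y).toReal
                  ≤ ((R : ℝ≥0∞) ^ 2).toReal :=
                    ENNReal.toReal_mono (ENNReal.pow_ne_top (ENNReal.natCast_ne_top R)) (hIle R y)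
                _ = (R : ℝ) ^ 2 := by simp
            simp_rw [hint_eq]
            rw [ofReal_integral_eq_lintegral_ofReal hintF
              (Filter.Eventually.of_forall fun y =>
                mul_nonneg (hφ0 y) ENNReal.toReal_nonneg)]
            exact lintegral_congr fun y => by
              rw [ENNReal.ofReal_mul (hφ0 y), ENNReal.ofReal_toReal (hIne R y)]
          have h1 : ∀ k, ENNReal.ofReal (∫ y, φ y * g R (f k y) ∂μ)
              ≤ ∫⁻ y, ENNReal.ofReal (φ y) * ‖f k y‖₊ ^ 2 ∂μ := by
            intro k
            have hmeask : Measurable fun y => φ y * g R (f k y) :=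
              hφc.measurable.mul ((hgc R).measurable.comp (hf k))
            have hintk : Integrable (fun y => φ y * g R (f k y)) μ := by
              refine ⟨hmeask.aestronglyMeasurable,
                HasFiniteIntegral.of_bounded (C := (max C 0) * (R : ℝ) ^ 2)
                  (Filter.Eventually.of_forall fun y => ?_)⟩
              rw [Real.norm_eq_abs, abs_mul, abs_of_nonneg (hφ0 y),
                abs_of_nonneg (hg0 R _)]
              exact mul_le_mul ((hC y).trans (le_max_left _ _)) (hgle R _)
                (hg0 R _) (le_max_right _ _)
            rw [ofReal_integral_eq_lintegral_ofReal hintk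
              (Filter.Eventually.of_forall fun y => mul_nonneg (hφ0 y) (hg0 R _))]
            refine lintegral_mono fun y => ?_
            rw [ENNReal.ofReal_mul (hφ0 y)]
            exact mul_le_mul_right (by rw [hpt]; exact min_le_left _ _) _
          have hlim : Filter.Tendsto
              (fun k => ENNReal.ofReal (∫ y, φ y * g R (f k y) ∂μ)) Filter.atTop
              (nhds (ENNReal.ofReal (∫ y, φ y * ∫ lam, g R lam ∂ν y ∂μ))) :=
            (ENNReal.continuous_ofReal.tendsto _).comp htend
          calc ∫⁻ y, ENNReal.ofReal (φ y) * ∫⁻ lam, ENNReal.ofReal (g R lam) ∂ν y ∂μ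
              = ENNReal.ofReal (∫ y, φ y * ∫ lam, g R lam ∂ν y ∂μ) := h2.symm
            _ = Filter.liminf (fun k => ENNReal.ofReal (∫ y, φ y * g R (f k y) ∂μ))
                Filter.atTop := hlim.liminf_eq.symm
            _ ≤ _ := Filter.liminf_le_liminf (Filter.Eventually.of_forall h1)
  refine ⟨main, ?_⟩
  have h := main (fun _ => 1) continuous_const (fun _ => zero_le_one)
  simp only [ENNReal.ofReal_one, one_mul] at h
  refine lt_of_le_of_lt (h.trans ?_) hK.lt_top
  calc Filter.liminf (fun k => ∫⁻ y, ‖f k y‖₊ ^ 2 ∂μ) Filter.atTop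
      ≤ Filter.liminf (fun _ : ℕ => K) Filter.atTop :=
        Filter.liminf_le_liminf (Filter.Eventually.of_forall hbd)
    _ = K := Filter.liminf_const K
end

section
/- Let y : ℝ³ × ℝ → ℝ³ be a C² solution of ∂²y/∂t² = div S(∇y) with S = ∂W/∂F and W(F) = G(Φ(F)), where Φ(F) = (F, cof F, det F) and G is C². Then with v = ∂_t y and F = ∇y, the functions (v, Φ(F)) satisfy the transport identities ∂_t Φ^A(F) = ∂_α( (∂Φ^A/∂F_{iα})(F) · v_i ) for all A = 1,…,19. -/
open scoped Matrix
attribute [local instance] Matrix.normedAddCommGroup Matrix.normedSpace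

/-- The deformation gradient of a time-dependent motion. -/
noncomputable def motionGrad (y : EuclideanSpace ℝ (Fin 3) → ℝ → EuclideanSpace ℝ (Fin 3))
    (z : EuclideanSpace ℝ (Fin 3)) (t : ℝ) : Matrix (Fin 3) (Fin 3) ℝ :=
  Matrix.of fun j β => fderiv ℝ (fun w => y w t) z (EuclideanSpace.single β 1) j

/-- The velocity of a time-dependent motion. -/
noncomputable def motionVel (y : EuclideanSpace ℝ (Fin 3) → ℝ → EuclideanSpace ℝ (Fin 3))
    (z : EuclideanSpace ℝ (Fin 3)) (t : ℝ) : EuclideanSpace ℝ (Fin 3) :=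
  deriv (fun s => y z s) t

set_option synthInstance.maxHeartbeats 1000000
set_option maxHeartbeats 4000000

local notation "Mat3" => Matrix (Fin 3) (Fin 3) ℝ

@[reducible] noncomputable def mat3Top : TopologicalSpace Mat3 :=
  @UniformSpace.toTopologicalSpace _ (@PseudoMetricSpace.toUniformSpace _
    (SeminormedAddCommGroup.toPseudoMetricSpace (E := Mat3)))
section mat3sec
attribute [local instance] mat3Top

lemma cof3 (M : Mat3) (j β : Fin 3) :
    (M.adjugate)ᵀ j β
      = M (j+1) (β+1) * M (j+2) (β+2) - M (j+1) (β+2) * M (j+2) (β+1) := by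
  fin_cases j <;> fin_cases β <;>
    simp [Matrix.adjugate_fin_three, Fin.isValue] <;> ring

noncomputable def entryCLM (a b : Fin 3) : Mat3 →L[ℝ] ℝ :=
  (ContinuousLinearMap.proj b).comp
    (ContinuousLinearMap.proj (R := ℝ) (φ := fun _ : Fin 3 => Fin 3 → ℝ) a)

@[simp] lemma entryCLM_apply (a b : Fin 3) (M : Mat3) : entryCLM a b M = M a b := rfl

@[simp] lemma fin3_01 : (0:Fin 3)+1 = 1 := rfl
@[simp] lemma fin3_02 : (0:Fin 3)+2 = 2 := rfl
@[simp] lemma fin3_11 : (1:Fin 3)+1 = 2 := rfl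
@[simp] lemma fin3_12 : (1:Fin 3)+2 = 0 := rfl
@[simp] lemma fin3_21 : (2:Fin 3)+1 = 0 := rfl
@[simp] lemma fin3_22 : (2:Fin 3)+2 = 1 := rfl

lemma ite_and_split (p q : Prop) [Decidable p] [Decidable q] :
    (if p ∧ q then (1:ℝ) else 0) = (if p then (1:ℝ) else 0) * (if q then 1 else 0) := by
  by_cases hp : p <;> by_cases hq : q <;> simp [hp, hq]

section entrycase
variable (j0 β0 : Fin 3)

lemma contDiff_entryfun : ContDiff ℝ 2 (fun M : Mat3 => M j0 β0) := (entryCLM j0 β0).contDiff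

lemma hNL_entry : ∀ (M : Mat3) (i j α β : Fin 3),
    fderiv ℝ (fderiv ℝ (fun M : Mat3 => M j0 β0)) M (Matrix.single j β 1)
        (Matrix.single i α 1)
      + fderiv ℝ (fderiv ℝ (fun M : Mat3 => M j0 β0)) M (Matrix.single j α 1)
        (Matrix.single i β 1) = 0 := by
  have h1 : fderiv ℝ (fun M : Mat3 => M j0 β0) = fun _ => entryCLM j0 β0 :=
    funext fun M => (entryCLM j0 β0).hasFDerivAt.fderiv
  intro M i j α β
  rw [h1]
  simp

end entrycase

section cofcase
variable (j0 β0 : Fin 3)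

lemma contDiff_coffun : ContDiff ℝ 2 (fun M : Mat3 =>
    M (j0+1) (β0+1) * M (j0+2) (β0+2) - M (j0+1) (β0+2) * M (j0+2) (β0+1)) :=
  (((entryCLM (j0+1) (β0+1)).contDiff.mul (entryCLM (j0+2) (β0+2)).contDiff).sub
    ((entryCLM (j0+1) (β0+2)).contDiff.mul (entryCLM (j0+2) (β0+1)).contDiff))

lemma hasFDerivAt_cof (M : Mat3) :
    HasFDerivAt (fun M : Mat3 =>
        M (j0+1) (β0+1) * M (j0+2) (β0+2) - M (j0+1) (β0+2) * M (j0+2) (β0+1))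
      (M (j0+1) (β0+1) • entryCLM (j0+2) (β0+2) + M (j0+2) (β0+2) • entryCLM (j0+1) (β0+1)
        - (M (j0+1) (β0+2) • entryCLM (j0+2) (β0+1)
            + M (j0+2) (β0+1) • entryCLM (j0+1) (β0+2))) M :=
  (((entryCLM (j0+1) (β0+1)).hasFDerivAt.mul (entryCLM (j0+2) (β0+2)).hasFDerivAt).sub
    ((entryCLM (j0+1) (β0+2)).hasFDerivAt.mul (entryCLM (j0+2) (β0+1)).hasFDerivAt))

lemma fderiv_coffun : fderiv ℝ (fun M : Mat3 =>
      M (j0+1) (β0+1) * M (j0+2) (β0+2) - M (j0+1) (β0+2) * M (j0+2) (β0+1))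
    = fun M : Mat3 =>
        M (j0+1) (β0+1) • entryCLM (j0+2) (β0+2) + M (j0+2) (β0+2) • entryCLM (j0+1) (β0+1)
        - (M (j0+1) (β0+2) • entryCLM (j0+2) (β0+1)
            + M (j0+2) (β0+1) • entryCLM (j0+1) (β0+2)) :=
  funext fun M => (hasFDerivAt_cof j0 β0 M).fderiv

lemma hasFDerivAt_Dcof (M : Mat3) :
    HasFDerivAt (fun M : Mat3 =>
        M (j0+1) (β0+1) • entryCLM (j0+2) (β0+2) + M (j0+2) (β0+2) • entryCLM (j0+1) (β0+1)
        - (M (j0+1) (β0+2) • entryCLM (j0+2) (β0+1)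
            + M (j0+2) (β0+1) • entryCLM (j0+1) (β0+2)))
      ((entryCLM (j0+1) (β0+1)).smulRight (entryCLM (j0+2) (β0+2))
        + (entryCLM (j0+2) (β0+2)).smulRight (entryCLM (j0+1) (β0+1))
        - ((entryCLM (j0+1) (β0+2)).smulRight (entryCLM (j0+2) (β0+1))
            + (entryCLM (j0+2) (β0+1)).smulRight (entryCLM (j0+1) (β0+2)))) M :=
  ((((entryCLM (j0+1) (β0+1)).hasFDerivAt.smul_const (entryCLM (j0+2) (β0+2))).fun_add
      ((entryCLM (j0+2) (β0+2)).hasFDerivAt.smul_const (entryCLM (j0+1) (β0+1)))).fun_sub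
    (((entryCLM (j0+1) (β0+2)).hasFDerivAt.smul_const (entryCLM (j0+2) (β0+1))).fun_add
      ((entryCLM (j0+2) (β0+1)).hasFDerivAt.smul_const (entryCLM (j0+1) (β0+2)))))

lemma Qcof_apply (M B C : Mat3) :
    fderiv ℝ (fderiv ℝ (fun M : Mat3 =>
        M (j0+1) (β0+1) * M (j0+2) (β0+2) - M (j0+1) (β0+2) * M (j0+2) (β0+1))) M B C
      = B (j0+1) (β0+1) * C (j0+2) (β0+2) + B (j0+2) (β0+2) * C (j0+1) (β0+1)
        - (B (j0+1) (β0+2) * C (j0+2) (β0+1) + B (j0+2) (β0+1) * C (j0+1) (β0+2)) := by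
  rw [fderiv_coffun, (hasFDerivAt_Dcof j0 β0 M).fderiv]
  simp [ContinuousLinearMap.smulRight_apply, smul_eq_mul]

lemma hNL_cof : ∀ (M : Mat3) (i j α β : Fin 3),
    fderiv ℝ (fderiv ℝ (fun M : Mat3 =>
        M (j0+1) (β0+1) * M (j0+2) (β0+2) - M (j0+1) (β0+2) * M (j0+2) (β0+1))) M
      (Matrix.single j β 1) (Matrix.single i α 1)
    + fderiv ℝ (fderiv ℝ (fun M : Mat3 =>
        M (j0+1) (β0+1) * M (j0+2) (β0+2) - M (j0+1) (β0+2) * M (j0+2) (β0+1))) M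
      (Matrix.single j α 1) (Matrix.single i β 1) = 0 := by
  intro M i j α β
  rw [Qcof_apply, Qcof_apply]
  simp only [Matrix.single, Matrix.of_apply, ite_and_split]
  ring

end cofcase

section detcase

local notation "detpoly" => (fun M : Mat3 =>
  M 0 0 * M 1 1 * M 2 2 - M 0 0 * M 1 2 * M 2 1 - M 0 1 * M 1 0 * M 2 2
    + M 0 1 * M 1 2 * M 2 0 + M 0 2 * M 1 0 * M 2 1 - M 0 2 * M 1 1 * M 2 0)

lemma det3 : (Matrix.det : Mat3 → ℝ) = detpoly := by
  funext M; rw [Matrix.det_fin_three]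

lemma contDiff_detfun : ContDiff ℝ 2 detpoly := by
  have h : ∀ a b : Fin 3, ContDiff ℝ 2 (fun M : Mat3 => M a b) :=
    fun a b => (entryCLM a b).contDiff
  exact (((((((h 0 0).mul (h 1 1)).mul (h 2 2)).sub (((h 0 0).mul (h 1 2)).mul (h 2 1))).sub
    (((h 0 1).mul (h 1 0)).mul (h 2 2))).add (((h 0 1).mul (h 1 2)).mul (h 2 0))).add
    (((h 0 2).mul (h 1 0)).mul (h 2 1))).sub (((h 0 2).mul (h 1 1)).mul (h 2 0))

noncomputable def Ddet (M : Mat3) : Mat3 →L[ℝ] ℝ :=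
  ∑ i : Fin 3, ∑ α : Fin 3,
    (M (i+1) (α+1) * M (i+2) (α+2) - M (i+1) (α+2) * M (i+2) (α+1)) • entryCLM i α

lemma fderiv_det3 : fderiv ℝ detpoly = Ddet := by
  funext M
  have h : ∀ a b : Fin 3, HasFDerivAt (fun M : Mat3 => M a b) (entryCLM a b) M :=
    fun a b => (entryCLM a b).hasFDerivAt
  have big := (((((((h 0 0).mul (h 1 1)).mul (h 2 2)).sub (((h 0 0).mul (h 1 2)).mul (h 2 1))).sub
    (((h 0 1).mul (h 1 0)).mul (h 2 2))).add (((h 0 1).mul (h 1 2)).mul (h 2 0))).add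
    (((h 0 2).mul (h 1 0)).mul (h 2 1))).sub (((h 0 2).mul (h 1 1)).mul (h 2 0))
  refine big.fderiv.trans ?_
  ext B
  simp only [Ddet, Fin.sum_univ_three, fin3_01, fin3_02, fin3_11, fin3_12, fin3_21, fin3_22,
    ContinuousLinearMap.sum_apply, ContinuousLinearMap.add_apply, ContinuousLinearMap.sub_apply,
    ContinuousLinearMap.smul_apply, smul_eq_mul, entryCLM_apply, Pi.mul_apply]
  ring

noncomputable def QDdet (M : Mat3) : Mat3 →L[ℝ] (Mat3 →L[ℝ] ℝ) :=
  ∑ i : Fin 3, ∑ α : Fin 3,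
    (M (i+1) (α+1) • entryCLM (i+2) (α+2) + M (i+2) (α+2) • entryCLM (i+1) (α+1)
      - (M (i+1) (α+2) • entryCLM (i+2) (α+1)
          + M (i+2) (α+1) • entryCLM (i+1) (α+2))).smulRight (entryCLM i α)

lemma hasFDerivAt_Ddet (M : Mat3) : HasFDerivAt Ddet (QDdet M) M := by
  have h : ∀ a b : Fin 3, HasFDerivAt (fun M : Mat3 => M a b) (entryCLM a b) M :=
    fun a b => (entryCLM a b).hasFDerivAt
  exact HasFDerivAt.fun_sum fun i _ => HasFDerivAt.fun_sum fun α _ =>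
    ((((h (i+1) (α+1)).mul (h (i+2) (α+2))).sub
        ((h (i+1) (α+2)).mul (h (i+2) (α+1)))).smul_const (entryCLM i α))

lemma Qdet_apply (M B C : Mat3) :
    fderiv ℝ (fderiv ℝ detpoly) M B C
      = ∑ i : Fin 3, ∑ α : Fin 3,
          (M (i+1) (α+1) * B (i+2) (α+2) + M (i+2) (α+2) * B (i+1) (α+1)
            - (M (i+1) (α+2) * B (i+2) (α+1) + M (i+2) (α+1) * B (i+1) (α+2))) * C i α := by
  rw [fderiv_det3, (hasFDerivAt_Ddet M).fderiv]
  simp only [QDdet, ContinuousLinearMap.sum_apply, ContinuousLinearMap.smulRight_apply,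
    ContinuousLinearMap.add_apply, ContinuousLinearMap.sub_apply, ContinuousLinearMap.smul_apply,
    smul_eq_mul, entryCLM_apply]

lemma hNL_det : ∀ (M : Mat3) (i j α β : Fin 3),
    fderiv ℝ (fderiv ℝ detpoly) M (Matrix.single j β 1) (Matrix.single i α 1)
    + fderiv ℝ (fderiv ℝ detpoly) M (Matrix.single j α 1) (Matrix.single i β 1)
      = 0 := by
  intro M i j α β
  rw [Qdet_apply, Qdet_apply]
  fin_cases α <;> fin_cases β <;>
    · simp only [Fin.sum_univ_three, fin3_01, fin3_02, fin3_11, fin3_12, fin3_21, fin3_22,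
        Matrix.single, Matrix.of_apply]
      simp
      try (split_ifs <;> ring)

end detcase

local notation "E3" => EuclideanSpace ℝ (Fin 3)

noncomputable def Ag (g : E3 × ℝ → E3) (j β : Fin 3) (p : E3 × ℝ) : ℝ :=
  fderiv ℝ g p (EuclideanSpace.single β 1, 0) j

noncomputable def Vg (g : E3 × ℝ → E3) (j : Fin 3) (p : E3 × ℝ) : ℝ :=
  fderiv ℝ g p (0, 1) j

section g
variable {g : E3 × ℝ → E3} (hg : ContDiff ℝ 2 g)
include hg

lemma hasFDerivAt_Ag (j β : Fin 3) (p : E3 × ℝ) :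
    HasFDerivAt (Ag g j β)
      (((EuclideanSpace.proj j).comp
          (ContinuousLinearMap.apply ℝ E3 (EuclideanSpace.single β 1, (0:ℝ)))).comp
        (fderiv ℝ (fderiv ℝ g) p)) p := by
  have h1 : ContDiff ℝ 1 (fderiv ℝ g) := hg.fderiv_right (by norm_num)
  exact (((EuclideanSpace.proj j).comp
      (ContinuousLinearMap.apply ℝ E3 (EuclideanSpace.single β 1, (0:ℝ)))).hasFDerivAt).comp p
    ((h1.differentiable one_ne_zero p).hasFDerivAt)

lemma fderiv_Ag (j β : Fin 3) (p w : E3 × ℝ) :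
    fderiv ℝ (Ag g j β) p w = fderiv ℝ (fderiv ℝ g) p w (EuclideanSpace.single β 1, 0) j := by
  rw [(hasFDerivAt_Ag hg j β p).fderiv]; rfl

lemma hasFDerivAt_Vg (j : Fin 3) (p : E3 × ℝ) :
    HasFDerivAt (Vg g j)
      (((EuclideanSpace.proj j).comp
          (ContinuousLinearMap.apply ℝ E3 ((0:E3), (1:ℝ)))).comp
        (fderiv ℝ (fderiv ℝ g) p)) p := by
  have h1 : ContDiff ℝ 1 (fderiv ℝ g) := hg.fderiv_right (by norm_num)
  exact (((EuclideanSpace.proj j).comp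
      (ContinuousLinearMap.apply ℝ E3 ((0:E3), (1:ℝ)))).hasFDerivAt).comp p
    ((h1.differentiable one_ne_zero p).hasFDerivAt)

lemma fderiv_Vg (j : Fin 3) (p w : E3 × ℝ) :
    fderiv ℝ (Vg g j) p w = fderiv ℝ (fderiv ℝ g) p w (0, 1) j := by
  rw [(hasFDerivAt_Vg hg j p).fderiv]; rfl

lemma sndsymm (p u w : E3 × ℝ) :
    fderiv ℝ (fderiv ℝ g) p u w = fderiv ℝ (fderiv ℝ g) p w u :=
  (hg.contDiffAt.isSymmSndFDerivAt (by simp)) u w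

end g

section y
variable {y : E3 → ℝ → E3} (hy : ContDiff ℝ 2 (fun pr : E3 × ℝ => y pr.1 pr.2))
include hy

lemma motionGrad_eq (z : E3) (t : ℝ) :
    motionGrad y z t = Matrix.of fun j β => Ag (fun pr => y pr.1 pr.2) j β (z, t) := by
  have hslice : HasFDerivAt (fun w => y w t)
      ((fderiv ℝ (fun pr : E3 × ℝ => y pr.1 pr.2) (z, t)).comp
        (ContinuousLinearMap.inl ℝ E3 ℝ)) z :=
    by have := ((hy.differentiable two_ne_zero (z, t)).hasFDerivAt).comp z (hasFDerivAt_prodMk_left (𝕜 := ℝ) z t); exact this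
  ext j β
  simp only [motionGrad, Matrix.of_apply, hslice.fderiv, ContinuousLinearMap.comp_apply,
    ContinuousLinearMap.inl_apply, Ag]

lemma motionVel_apply (z : E3) (t : ℝ) (j : Fin 3) :
    motionVel y z t j = Vg (fun pr => y pr.1 pr.2) j (z, t) := by
  have hder : HasDerivAt (fun s => y z s)
      (fderiv ℝ (fun pr : E3 × ℝ => y pr.1 pr.2) (z, t) ((0:E3), (1:ℝ))) t :=
    ((hy.differentiable two_ne_zero (z, t)).hasFDerivAt).comp_hasDerivAt t
      ((hasDerivAt_const t z).prodMk (hasDerivAt_id t))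
  rw [motionVel, hder.deriv]; rfl

end y


lemma clm_expand {F : Type*} [NormedAddCommGroup F] [NormedSpace ℝ F]
    (L : Mat3 →L[ℝ] F) (C : Mat3) :
    L C = ∑ j : Fin 3, ∑ β : Fin 3, C j β • L (Matrix.single j β 1) := by
  conv_lhs => rw [Matrix.matrix_eq_sum_single C]
  rw [map_sum]
  refine Finset.sum_congr rfl fun j _ => ?_
  rw [map_sum]
  refine Finset.sum_congr rfl fun β _ => ?_
  rw [show Matrix.single j β (C j β) = C j β • Matrix.single j β 1 by
        rw [Matrix.smul_single, smul_eq_mul, mul_one], map_smul]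

lemma clm_expand₂ (L : Mat3 →L[ℝ] (Mat3 →L[ℝ] ℝ)) (C B : Mat3) :
    L C B = ∑ j : Fin 3, ∑ β : Fin 3, C j β * (L (Matrix.single j β 1) B) := by
  rw [clm_expand L C]
  simp [ContinuousLinearMap.sum_apply]

lemma swap4 (f : Fin 3 → Fin 3 → Fin 3 → Fin 3 → ℝ) :
    ∑ α : Fin 3, ∑ i : Fin 3, ∑ j : Fin 3, ∑ β : Fin 3, f α i j β
      = ∑ α : Fin 3, ∑ i : Fin 3, ∑ j : Fin 3, ∑ β : Fin 3, f β i j α := by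
  simp only [Fin.sum_univ_three]
  ring

lemma final_algebra (DΦ c : Fin 3 → Fin 3 → ℝ) (d : Fin 3 → Fin 3 → Fin 3 → ℝ)
    (Q : Fin 3 → Fin 3 → Fin 3 → Fin 3 → ℝ) (vv : Fin 3 → ℝ)
    (hQ : ∀ i j α β, Q j β i α + Q j α i β = 0)
    (hd : ∀ j α β, d j β α = d j α β) :
    ∑ α : Fin 3, ∑ i : Fin 3,
        (DΦ i α * c i α + vv i * ∑ j : Fin 3, ∑ β : Fin 3, d j β α * Q j β i α)
      = ∑ j : Fin 3, ∑ β : Fin 3, c j β * DΦ j β := by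
  have hT : (∑ α : Fin 3, ∑ i : Fin 3,
      vv i * ∑ j : Fin 3, ∑ β : Fin 3, d j β α * Q j β i α) = 0 := by
    set T := ∑ α : Fin 3, ∑ i : Fin 3,
      vv i * ∑ j : Fin 3, ∑ β : Fin 3, d j β α * Q j β i α with hTdef
    have h1 : T = ∑ α : Fin 3, ∑ i : Fin 3, ∑ j : Fin 3, ∑ β : Fin 3,
        vv i * (d j β α * Q j β i α) := by
      rw [hTdef]
      refine Finset.sum_congr rfl fun α _ => Finset.sum_congr rfl fun i _ => ?_
      rw [Finset.mul_sum]
      exact Finset.sum_congr rfl fun j _ => (Finset.mul_sum _ _ _)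
    have h2 : T + T = 0 := by
      nth_rewrite 2 [h1]
      rw [swap4 (fun α i j β => vv i * (d j β α * Q j β i α))]
      rw [h1, ← Finset.sum_add_distrib]
      rw [show (0:ℝ) = ∑ α : Fin 3, (0:ℝ) by simp]
      refine Finset.sum_congr rfl fun α _ => ?_
      rw [← Finset.sum_add_distrib]
      rw [show (0:ℝ) = ∑ i : Fin 3, (0:ℝ) by simp]
      refine Finset.sum_congr rfl fun i _ => ?_
      rw [← Finset.sum_add_distrib]
      rw [show (0:ℝ) = ∑ j : Fin 3, (0:ℝ) by simp]
      refine Finset.sum_congr rfl fun j _ => ?_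
      rw [← Finset.sum_add_distrib]
      rw [show (0:ℝ) = ∑ β : Fin 3, (0:ℝ) by simp]
      refine Finset.sum_congr rfl fun β _ => ?_
      have := hQ i j α β
      have hd' := hd j α β
      calc vv i * (d j β α * Q j β i α) + vv i * (d j α β * Q j α i β)
          = vv i * d j β α * (Q j β i α + Q j α i β) := by rw [hd']; ring
        _ = 0 := by rw [this]; ring
    linarith
  have hsplit : ∑ α : Fin 3, ∑ i : Fin 3,
      (DΦ i α * c i α + vv i * ∑ j : Fin 3, ∑ β : Fin 3, d j β α * Q j β i α)
      = (∑ α : Fin 3, ∑ i : Fin 3, DΦ i α * c i α)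
        + ∑ α : Fin 3, ∑ i : Fin 3,
            vv i * ∑ j : Fin 3, ∑ β : Fin 3, d j β α * Q j β i α := by
    rw [← Finset.sum_add_distrib]
    exact Finset.sum_congr rfl fun α _ => Finset.sum_add_distrib
  rw [hsplit, hT, add_zero, Finset.sum_comm]
  exact Finset.sum_congr rfl fun i _ => Finset.sum_congr rfl fun α _ => mul_comm _ _

local notation "E3'" => EuclideanSpace ℝ (Fin 3)

section main
variable {y : EuclideanSpace ℝ (Fin 3) → ℝ → EuclideanSpace ℝ (Fin 3)}
  (hy : ContDiff ℝ 2 (fun pr : EuclideanSpace ℝ (Fin 3) × ℝ => y pr.1 pr.2))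
include hy

theorem transport_main (Φ : Mat3 → ℝ) (hΦ : ContDiff ℝ 2 Φ)
    (hNL : ∀ (M : Mat3) (i j α β : Fin 3),
      fderiv ℝ (fderiv ℝ Φ) M (Matrix.single j β 1) (Matrix.single i α 1)
        + fderiv ℝ (fderiv ℝ Φ) M (Matrix.single j α 1) (Matrix.single i β 1)
        = 0)
    (x : EuclideanSpace ℝ (Fin 3)) (t : ℝ) :
    deriv (fun s => Φ (motionGrad y x s)) t =
      ∑ α : Fin 3,
        fderiv ℝ (fun z =>
            ∑ i : Fin 3,
              fderiv ℝ Φ (motionGrad y z t) (Matrix.single i α 1) * motionVel y z t i)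
          x (EuclideanSpace.single α 1) := by
  have hg : ContDiff ℝ 2 (fun pr : E3' × ℝ => y pr.1 pr.2) := hy
  set g : E3' × ℝ → E3' := fun pr => y pr.1 pr.2 with hgdef
  -- second derivative of g at (x,t)
  set G2 := fderiv ℝ (fderiv ℝ g) (x, t) with hG2
  -- data
  set F0 : Mat3 := Matrix.of fun j β => Ag g j β (x, t) with hF0
  set c : Fin 3 → Fin 3 → ℝ :=
    fun j β => G2 ((0:E3'), (1:ℝ)) (EuclideanSpace.single β 1, (0:ℝ)) j with hcdef
  set d : Fin 3 → Fin 3 → Fin 3 → ℝ :=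
    fun j β α => G2 (EuclideanSpace.single α 1, (0:ℝ)) (EuclideanSpace.single β 1, (0:ℝ)) j
    with hddef
  set DP : Fin 3 → Fin 3 → ℝ :=
    fun i α => fderiv ℝ Φ F0 (Matrix.single i α 1) with hDP
  set Q : Fin 3 → Fin 3 → Fin 3 → Fin 3 → ℝ :=
    fun j β i α => fderiv ℝ (fderiv ℝ Φ) F0 (Matrix.single j β 1)
      (Matrix.single i α 1) with hQdef
  set vv : Fin 3 → ℝ := fun i => Vg g i (x, t) with hvv
  have hΦdiff : Differentiable ℝ Φ := hΦ.differentiable two_ne_zero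
  have hΦ1 : ContDiff ℝ 1 (fderiv ℝ Φ) := hΦ.fderiv_right (by norm_num)
  -- time slice derivatives of the entries
  have hAt : ∀ j β, HasDerivAt (fun s => Ag g j β (x, s)) (c j β) t := fun j β =>
    (hasFDerivAt_Ag hg j β (x, t)).comp_hasDerivAt t
      ((hasDerivAt_const t x).prodMk (hasDerivAt_id t))
  -- time derivative of matrix
  have hMt : HasDerivAt (fun s => (Matrix.of fun j β => Ag g j β (x, s) : Mat3))
      (Matrix.of fun j β => c j β : Mat3) t :=
    hasDerivAt_pi.2 fun j => hasDerivAt_pi.2 fun β => hAt j β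
  -- LHS
  have hL : HasDerivAt (fun s => Φ (Matrix.of fun j β => Ag g j β (x, s)))
      (fderiv ℝ Φ F0 (Matrix.of fun j β => c j β : Mat3)) t :=
    (hΦdiff F0).hasFDerivAt.comp_hasDerivAt t hMt
  have hLHS : deriv (fun s => Φ (motionGrad y x s)) t
      = ∑ j : Fin 3, ∑ β : Fin 3, c j β * DP j β := by
    have hfun : (fun s => Φ (motionGrad y x s))
        = fun s => Φ (Matrix.of fun j β => Ag g j β (x, s)) :=
      funext fun s => by rw [motionGrad_eq hy x s]
    rw [hfun, hL.deriv, clm_expand]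
    exact Finset.sum_congr rfl fun j _ => Finset.sum_congr rfl fun β _ => by
      simp [smul_eq_mul, hDP]
  -- spatial derivative machinery
  set LM : EuclideanSpace ℝ (Fin 3) →L[ℝ] Mat3 :=
    (ContinuousLinearMap.pi fun j => ContinuousLinearMap.pi fun β =>
      ((((EuclideanSpace.proj j).comp
          (ContinuousLinearMap.apply ℝ E3' (EuclideanSpace.single β 1, (0:ℝ)))).comp G2).comp
        (ContinuousLinearMap.inl ℝ E3' ℝ))) with hLM
  have hentry : ∀ j β, HasFDerivAt (fun z => Ag g j β (z, t))
      ((((EuclideanSpace.proj j).comp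
          (ContinuousLinearMap.apply ℝ E3' (EuclideanSpace.single β 1, (0:ℝ)))).comp G2).comp
        (ContinuousLinearMap.inl ℝ E3' ℝ)) x :=
    fun j β => by have := (hasFDerivAt_Ag hg j β (x, t)).comp x (hasFDerivAt_prodMk_left (𝕜 := ℝ) x t); exact this
  have hMz : HasFDerivAt (fun z => (Matrix.of fun j β => Ag g j β (z, t) : Mat3)) LM x := by
    apply hasFDerivAt_pi''
    intro j
    rw [hLM, ContinuousLinearMap.proj_pi]
    apply hasFDerivAt_pi''
    intro β
    rw [ContinuousLinearMap.proj_pi]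
    exact hentry j β
  have hVz : ∀ i, HasFDerivAt (fun z => Vg g i (z, t))
      ((((EuclideanSpace.proj i).comp
          (ContinuousLinearMap.apply ℝ E3' ((0:E3'), (1:ℝ)))).comp G2).comp
        (ContinuousLinearMap.inl ℝ E3' ℝ)) x :=
    fun i => by have := (hasFDerivAt_Vg hg i (x, t)).comp x (hasFDerivAt_prodMk_left (𝕜 := ℝ) x t); exact this
  have h1 : ∀ i α, HasFDerivAt
      (fun z => fderiv ℝ Φ (Matrix.of fun j β => Ag g j β (z, t) : Mat3)
        (Matrix.single i α 1))
      (((fderiv ℝ (fderiv ℝ Φ) F0).comp LM).flip (Matrix.single i α 1)) x := by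
    intro i α
    have h0 := (((hΦ1.differentiable one_ne_zero F0).hasFDerivAt).comp x hMz).clm_apply
      (hasFDerivAt_const (Matrix.single i α 1) x)
    simpa using h0
  have hprod : ∀ α, HasFDerivAt
      (fun z => ∑ i : Fin 3,
        fderiv ℝ Φ (Matrix.of fun j β => Ag g j β (z, t) : Mat3)
            (Matrix.single i α 1) * Vg g i (z, t))
      (∑ i : Fin 3,
        (DP i α • ((((EuclideanSpace.proj i).comp
            (ContinuousLinearMap.apply ℝ E3' ((0:E3'), (1:ℝ)))).comp G2).comp
          (ContinuousLinearMap.inl ℝ E3' ℝ))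
        + vv i • (((fderiv ℝ (fderiv ℝ Φ) F0).comp LM).flip (Matrix.single i α 1)))) x :=
    fun α => HasFDerivAt.fun_sum fun i _ => (h1 i α).mul (hVz i)
  have hRHSα : ∀ α : Fin 3,
      fderiv ℝ (fun z =>
          ∑ i : Fin 3,
            fderiv ℝ Φ (motionGrad y z t) (Matrix.single i α 1) * motionVel y z t i)
        x (EuclideanSpace.single α 1)
      = ∑ i : Fin 3,
          (DP i α * c i α + vv i * ∑ j : Fin 3, ∑ β : Fin 3, d j β α * Q j β i α) := by
    intro α
    have hfun : (fun z =>
        ∑ i : Fin 3,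
          fderiv ℝ Φ (motionGrad y z t) (Matrix.single i α 1) * motionVel y z t i)
        = fun z => ∑ i : Fin 3,
            fderiv ℝ Φ (Matrix.of fun j β => Ag g j β (z, t) : Mat3)
              (Matrix.single i α 1) * Vg g i (z, t) :=
      funext fun z => Finset.sum_congr rfl fun i _ => by
        rw [motionGrad_eq hy, motionVel_apply hy]
    rw [hfun, (hprod α).fderiv, ContinuousLinearMap.sum_apply]
    refine Finset.sum_congr rfl fun i _ => ?_
    rw [ContinuousLinearMap.add_apply, ContinuousLinearMap.smul_apply,
      ContinuousLinearMap.smul_apply, smul_eq_mul, smul_eq_mul]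
    congr 1
    · congr 1
      show G2 (EuclideanSpace.single α 1, (0:ℝ)) ((0:E3'), (1:ℝ)) i = c i α
      simp only [hcdef, hG2]
      rw [sndsymm hg]
    · congr 1
      show fderiv ℝ (fderiv ℝ Φ) F0 (LM (EuclideanSpace.single α 1))
          (Matrix.single i α 1)
        = ∑ j : Fin 3, ∑ β : Fin 3, d j β α * Q j β i α
      rw [clm_expand₂]
      refine Finset.sum_congr rfl fun j _ => Finset.sum_congr rfl fun β _ => rfl
  have hQ : ∀ i j α β, Q j β i α + Q j α i β = 0 := fun i j α β => hNL F0 i j α β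
  have hd : ∀ j α β, d j β α = d j α β := by
    intro j α β
    simp only [hddef, hG2]
    rw [sndsymm hg]
  calc deriv (fun s => Φ (motionGrad y x s)) t
      = ∑ j : Fin 3, ∑ β : Fin 3, c j β * DP j β := hLHS
    _ = ∑ α : Fin 3, ∑ i : Fin 3,
          (DP i α * c i α + vv i * ∑ j : Fin 3, ∑ β : Fin 3, d j β α * Q j β i α) :=
        (final_algebra DP c d Q vv hQ hd).symm
    _ = _ := Finset.sum_congr rfl fun α _ => (hRHSα α).symm

end main

end mat3sec

/-- Transport identities for the null Lagrangians: if `y` is a `C²` solution of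
polyconvex elastodynamics `∂²y/∂t² = div S(∇y)` with `S = ∂W/∂F`,
`W(F) = G(F, cof F, det F)`, then each null Lagrangian component `Φ^A` satisfies
`∂_t Φ^A(F) = ∂_α((∂Φ^A/∂F_{iα})(F) v_i)` with `v = ∂_t y`, `F = ∇y`. -/
theorem null_lagrangian_transport
    (y : EuclideanSpace ℝ (Fin 3) → ℝ → EuclideanSpace ℝ (Fin 3))
    (hy : ContDiff ℝ 2 (fun pr : EuclideanSpace ℝ (Fin 3) × ℝ => y pr.1 pr.2))
    (G : Matrix (Fin 3) (Fin 3) ℝ × Matrix (Fin 3) (Fin 3) ℝ × ℝ → ℝ)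
    (hG : ContDiff ℝ 2 G)
    -- the PDE ∂²y/∂t² = div S(∇y), S_{iα}(M) = ∂W/∂F_{iα}(M), W(M) = G(M, cof M, det M)
    (hPDE : ∀ x t (i : Fin 3),
      deriv (fun s => motionVel y x s i) t =
        ∑ α : Fin 3,
          fderiv ℝ (fun z =>
              fderiv ℝ (fun M : Matrix (Fin 3) (Fin 3) ℝ =>
                  G (M, (M.adjugate)ᵀ, M.det))
                (motionGrad y z t) (Matrix.single i α 1))
            x (EuclideanSpace.single α 1))
    (ΦA : Matrix (Fin 3) (Fin 3) ℝ → ℝ)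
    (hΦ : (∃ j β : Fin 3, ΦA = fun M => M j β) ∨
          (∃ j β : Fin 3, ΦA = fun M => (M.adjugate)ᵀ j β) ∨
          ΦA = Matrix.det) :
    ∀ x t,
      deriv (fun s => ΦA (motionGrad y x s)) t =
        ∑ α : Fin 3,
          fderiv ℝ (fun z =>
              ∑ i : Fin 3,
                fderiv ℝ ΦA (motionGrad y z t) (Matrix.single i α 1) *
                  motionVel y z t i)
            x (EuclideanSpace.single α 1) := by
  intro x t
  rcases hΦ with ⟨j0, β0, rfl⟩ | ⟨j0, β0, hA⟩ | hA
  · exact transport_main hy _ (contDiff_entryfun j0 β0) (hNL_entry j0 β0) x t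
  · have hrw : ΦA = fun M : Matrix (Fin 3) (Fin 3) ℝ =>
        M (j0+1) (β0+1) * M (j0+2) (β0+2) - M (j0+1) (β0+2) * M (j0+2) (β0+1) := by
      funext M
      rw [hA]
      exact cof3 M j0 β0
    rw [hrw]
    exact transport_main hy _ (contDiff_coffun j0 β0) (hNL_cof j0 β0) x t
  · rw [hA, det3]
    exact transport_main hy _ contDiff_detfun hNL_det x t
end
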